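/- Let r ≥ 4 and n ≥ 4r+10. The sequence π = ((n−1)^{r−3}, (r−1)^{n−r+3}) (r−3 terms equal to n−1 followed by n−r+3 terms equal to r−1) is graphic and potentially K_{r+1} − (P_2 ∪ K_2)-graphic. -/

import Mathlib

open SimpleGraph

/-- The degree of a vertex `v` in a simple graph `G`. -/
noncomputable def degOf {V : Type*} (G : SimpleGraph V) (v : V) : ℕ :=
  (G.neighborSet v).ncard

/-- `G` is a realization of the degree sequence `d`. -/
def Realizes {n : ℕ} (G : SimpleGraph (Fin n)) (d : Fin n → ℕ) : Prop :=
  ∃ e : Equiv.Perm (Fin n), ∀ i, degOf G (e i) = d i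

/-- `d` is a graphic sequence. -/
def IsGraphic {n : ℕ} (d : Fin n → ℕ) : Prop :=
  ∃ G : SimpleGraph (Fin n), Realizes G d

/-- `G` contains (a copy of) `H` as a subgraph. -/
def ContainsSub {V W : Type*} (G : SimpleGraph V) (H : SimpleGraph W) : Prop :=
  ∃ f : W → V, Function.Injective f ∧ ∀ ⦃a b⦄, H.Adj a b → G.Adj (f a) (f b)

/-- `d` is potentially `H`-graphic. -/
def Potentially {n m : ℕ} (d : Fin n → ℕ) (H : SimpleGraph (Fin m)) : Prop :=
  ∃ G : SimpleGraph (Fin n), Realizes G d ∧ ContainsSub G H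

/-- The edges of a fixed copy of `kP₂ ∪ tK₂` : the `i`-th path `P₂` uses vertices
`3i, 3i+1, 3i+2` and the `j`-th edge `K₂` uses vertices `3k+2j, 3k+2j+1`. -/
def removedRel (k t : ℕ) (a b : ℕ) : Prop :=
  (∃ i < k, (a = 3*i ∧ b = 3*i+1) ∨ (a = 3*i+1 ∧ b = 3*i+2)) ∨
  (∃ j < t, a = 3*k+2*j ∧ b = 3*k+2*j+1)

/-- The graph `K_{r+1} - (kP₂ ∪ tK₂)` : the complete graph on `r+1` vertices with the
edge set of a copy of `kP₂ ∪ tK₂` deleted. -/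
def KminusKPT (r k t : ℕ) : SimpleGraph (Fin (r+1)) :=
  (⊤ : SimpleGraph (Fin (r+1))) \ SimpleGraph.fromRel (fun a b => removedRel k t a.val b.val)

/-- The join `K_{r-2} + \overline{K_{n-r+2}}` on `n` vertices: the first `r-2` vertices form a
clique and are joined to all remaining vertices, which form an independent set. -/
def joinCompleteEmpty (n r : ℕ) : SimpleGraph (Fin n) where
  Adj a b := a ≠ b ∧ (a.val < r-2 ∨ b.val < r-2)
  symm := ⟨fun a b h => ⟨h.1.symm, h.2.symm⟩⟩
  loopless := ⟨fun a h => h.1 rfl⟩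

/-- successor along the cycles: 4-cycle on M..M+3, big cycle on M+4..n-1 -/
def succN (M n v : ℕ) : ℕ := if v = M+3 then M else if v = n-1 then M+4 else v+1

def predN (M n v : ℕ) : ℕ := if v = M then M+3 else if v = M+4 then n-1 else v-1

lemma succN_range {M n v : ℕ} (h1 : 1 ≤ M) (h2 : 4*M+22 ≤ n) (hv : M ≤ v) (hv2 : v < n) :
    M ≤ succN M n v ∧ succN M n v < n ∧ succN M n v ≠ v := by
  unfold succN; split_ifs <;> omega

lemma predN_range {M n v : ℕ} (h1 : 1 ≤ M) (h2 : 4*M+22 ≤ n) (hv : M ≤ v) (hv2 : v < n) :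
    M ≤ predN M n v ∧ predN M n v < n ∧ predN M n v ≠ v := by
  unfold predN; split_ifs <;> omega

lemma succ_ne_pred {M n v : ℕ} (h1 : 1 ≤ M) (h2 : 4*M+22 ≤ n) (hv : M ≤ v) (hv2 : v < n) :
    succN M n v ≠ predN M n v := by
  unfold succN predN; split_ifs <;> omega

lemma succ_eq_iff {M n u v : ℕ} (h1 : 1 ≤ M) (h2 : 4*M+22 ≤ n)
    (hu : M ≤ u) (hu2 : u < n) (hv : M ≤ v) (hv2 : v < n) :
    v = succN M n u ↔ u = predN M n v := by
  unfold succN predN; split_ifs <;> omega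

def myG (M n : ℕ) : SimpleGraph (Fin n) where
  Adj a b := a ≠ b ∧ (a.val < M ∨ b.val < M ∨ b.val = succN M n a.val ∨ a.val = succN M n b.val)
  symm := by
    constructor
    intro a b h
    refine ⟨h.1.symm, ?_⟩
    rcases h.2 with h | h | h | h
    · exact Or.inr (Or.inl h)
    · exact Or.inl h
    · exact Or.inr (Or.inr (Or.inr h))
    · exact Or.inr (Or.inr (Or.inl h))
  loopless := ⟨fun a h => h.1 rfl⟩

lemma myG_adj {M n : ℕ} {a b : Fin n} : (myG M n).Adj a b ↔
    a ≠ b ∧ (a.val < M ∨ b.val < M ∨ b.val = succN M n a.val ∨ a.val = succN M n b.val) :=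
  Iff.rfl

lemma ncard_compl_singleton (n : ℕ) (v : Fin n) : ({v}ᶜ : Set (Fin n)).ncard = n - 1 := by
  have h := Set.ncard_add_ncard_compl ({v} : Set (Fin n))
  rw [Set.ncard_singleton] at h
  simp [Nat.card_eq_fintype_card] at h
  omega

lemma ncard_lt_set (n M : ℕ) (h : M ≤ n) : ({u : Fin n | u.val < M}).ncard = M := by
  have he : {u : Fin n | u.val < M} = (Fin.castLE h) '' Set.univ := by
    ext u
    simp only [Set.mem_setOf_eq, Set.image_univ, Set.mem_range]
    constructor
    · intro hu; exact ⟨⟨u.val, hu⟩, rfl⟩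
    · rintro ⟨i, rfl⟩; exact i.2
  rw [he, Set.ncard_image_of_injective _ (Fin.castLE_injective h), Set.ncard_univ,
    Nat.card_eq_fintype_card, Fintype.card_fin]

lemma deg_full {M n : ℕ} (v : Fin n) (hv : v.val < M) : degOf (myG M n) v = n - 1 := by
  have hset : (myG M n).neighborSet v = ({v}ᶜ : Set (Fin n)) := by
    ext u
    simp only [mem_neighborSet, myG_adj, Set.mem_compl_iff, Set.mem_singleton_iff]
    constructor
    · intro h; exact fun he => h.1 he.symm
    · intro h; exact ⟨fun he => h he.symm, Or.inl hv⟩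
  rw [degOf, hset, ncard_compl_singleton]

lemma deg_low {M n : ℕ} (h1 : 1 ≤ M) (h2 : 4*M+22 ≤ n) (v : Fin n) (hv : M ≤ v.val) :
    degOf (myG M n) v = M + 2 := by
  obtain ⟨hs1, hs2, hs3⟩ := succN_range h1 h2 hv v.2
  obtain ⟨hp1, hp2, hp3⟩ := predN_range h1 h2 hv v.2
  have hsp := succ_ne_pred h1 h2 hv v.2
  set s : Fin n := ⟨succN M n v.val, hs2⟩ with hs
  set p : Fin n := ⟨predN M n v.val, hp2⟩ with hp
  have hset : (myG M n).neighborSet v = {u : Fin n | u.val < M} ∪ {s, p} := by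
    ext u
    simp only [mem_neighborSet, myG_adj, Set.mem_union, Set.mem_setOf_eq,
      Set.mem_insert_iff, Set.mem_singleton_iff]
    constructor
    · rintro ⟨hne, h⟩
      by_cases hu : u.val < M
      · exact Or.inl hu
      · push_neg at hu
        rcases h with h | h | h | h
        · omega
        · omega
        · exact Or.inr (Or.inl (Fin.ext h))
        · have := (succ_eq_iff h1 h2 hu u.2 hv v.2).mp h
          exact Or.inr (Or.inr (Fin.ext this))
    · rintro (hu | rfl | rfl)
      · exact ⟨by rintro rfl; omega, Or.inr (Or.inl hu)⟩
      · exact ⟨fun h => hs3 (Fin.ext_iff.mp h).symm, Or.inr (Or.inr (Or.inl rfl))⟩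
      · refine ⟨fun h => hp3 (Fin.ext_iff.mp h).symm, Or.inr (Or.inr (Or.inr ?_))⟩
        exact (succ_eq_iff h1 h2 hp1 hp2 hv v.2).mpr rfl
  have hdisj : Disjoint ({u : Fin n | u.val < M}) ({s, p} : Set (Fin n)) := by
    rw [Set.disjoint_left]
    rintro u hu (rfl | rfl) <;> simp only [Set.mem_setOf_eq, hs, hp] at hu <;> omega
  rw [degOf, hset, Set.ncard_union_eq hdisj (Set.toFinite _) (Set.toFinite _),
    ncard_lt_set n M (by omega), Set.ncard_pair (by simp [hs, hp, Fin.ext_iff, hsp])]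


/-- the image value of vertex `j` of `K_{r+1}` in `Fin n` -/
def fval (M j : ℕ) : ℕ :=
  if j = 0 then 0 else if j = 1 then M else if j = 2 then M+2
  else if j = 3 then M+1 else if j = 4 then M+3 else j - 4


set_option maxHeartbeats 1000000 in
theorem special_sequence_potentially (r n : ℕ) (hr : 4 ≤ r) (hn : 4*r + 10 ≤ n) :
    IsGraphic (fun i : Fin n => if i.val < r - 3 then n - 1 else r - 1) ∧
    Potentially (fun i : Fin n => if i.val < r - 3 then n - 1 else r - 1)
      (KminusKPT r 1 1) := by
  obtain ⟨M, rfl⟩ : ∃ M, r = M + 3 := ⟨r - 3, by omega⟩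
  have h1 : 1 ≤ M := by omega
  have h2 : 4*M + 22 ≤ n := by omega
  have e3 : M + 3 - 3 = M := by omega
  have e1 : M + 3 - 1 = M + 2 := by omega
  simp only [e3, e1]
  have hreal : Realizes (myG M n) (fun i : Fin n => if i.val < M then n - 1 else M + 2) := by
    refine ⟨Equiv.refl _, fun i => ?_⟩
    simp only [Equiv.refl_apply]
    by_cases hi : i.val < M
    · rw [if_pos hi, deg_full i hi]
    · rw [if_neg hi, deg_low h1 h2 i (by omega)]
  refine ⟨⟨myG M n, hreal⟩, myG M n, hreal, ?_⟩
  -- containment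
  refine ⟨fun j => ⟨fval M j.val, by unfold fval; have := j.2; split_ifs <;> omega⟩, ?_, ?_⟩
  · intro a b hab
    have h := Fin.ext_iff.mp hab
    simp only [fval] at h
    have ha := a.2; have hb := b.2
    apply Fin.ext
    split_ifs at h <;> omega
  · intro a b hab
    rw [KminusKPT, sdiff_adj, fromRel_adj] at hab
    obtain ⟨htop, hrel⟩ := hab
    have hne : a ≠ b := htop.ne
    have hnr : ¬(removedRel 1 1 a.val b.val ∨ removedRel 1 1 b.val a.val) := by
      intro h; exact hrel ⟨hne, h⟩
    push_neg at hnr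
    rw [myG_adj]
    constructor
    · intro h
      have := Fin.ext_iff.mp h
      simp only [fval] at this
      have ha := a.2; have hb := b.2
      have : a.val = b.val := by split_ifs at this <;> omega
      exact hne (Fin.ext this)
    · -- adjacency in myG
      have ha := a.2; have hb := b.2
      have hcase : ∀ j : Fin (M+3+1), fval M j.val < M ∨ j.val = 1 ∨ j.val = 2 ∨ j.val = 3 ∨ j.val = 4 := by
        intro j
        have := j.2
        by_cases hj0 : j.val = 0
        · left; simp [fval, hj0]; omega
        · by_cases hj : 5 ≤ j.val
          · left; simp only [fval]; split_ifs <;> omega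
          · right; omega
      have s1 : succN M n M = M+1 := by unfold succN; split_ifs <;> omega
      have s2 : succN M n (M+1) = M+2 := by unfold succN; split_ifs <;> omega
      have s3 : succN M n (M+2) = M+3 := by unfold succN; split_ifs <;> omega
      have s4 : succN M n (M+3) = M := by unfold succN; split_ifs <;> omega
      rcases hcase a with h | ha1 | ha1 | ha1 | ha1
      · exact Or.inl h
      all_goals rcases hcase b with h | hb1 | hb1 | hb1 | hb1
      all_goals try exact Or.inr (Or.inl h)
      · -- a=1, b=1
        exfalso; exact hne (Fin.ext (by omega))
      · -- a=1, b=2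
        exfalso; exact hnr.1 (Or.inl ⟨0, Nat.one_pos, Or.inr ⟨by omega, by omega⟩⟩)
      · -- a=1, b=3
        refine Or.inr (Or.inr (Or.inl ?_))
        show fval M b.val = succN M n (fval M a.val)
        rw [ha1, hb1]; simp only [fval]; norm_num; rw [s1]
      · -- a=1, b=4
        refine Or.inr (Or.inr (Or.inr ?_))
        show fval M a.val = succN M n (fval M b.val)
        rw [ha1, hb1]; simp only [fval]; norm_num; rw [s4]
      · -- a=2, b=1
        exfalso; exact hnr.2 (Or.inl ⟨0, Nat.one_pos, Or.inr ⟨by omega, by omega⟩⟩)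
      · -- a=2, b=2
        exfalso; exact hne (Fin.ext (by omega))
      · -- a=2, b=3
        refine Or.inr (Or.inr (Or.inr ?_))
        show fval M a.val = succN M n (fval M b.val)
        rw [ha1, hb1]; simp only [fval]; norm_num; rw [s2]
      · -- a=2, b=4
        refine Or.inr (Or.inr (Or.inl ?_))
        show fval M b.val = succN M n (fval M a.val)
        rw [ha1, hb1]; simp only [fval]; norm_num; rw [s3]
      · -- a=3, b=1
        refine Or.inr (Or.inr (Or.inr ?_))
        show fval M a.val = succN M n (fval M b.val)
        rw [ha1, hb1]; simp only [fval]; norm_num; rw [s1]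
      · -- a=3, b=2
        refine Or.inr (Or.inr (Or.inl ?_))
        show fval M b.val = succN M n (fval M a.val)
        rw [ha1, hb1]; simp only [fval]; norm_num; rw [s2]
      · -- a=3, b=3
        exfalso; exact hne (Fin.ext (by omega))
      · -- a=3, b=4
        exfalso; exact hnr.1 (Or.inr ⟨0, Nat.one_pos, by omega, by omega⟩)
      · -- a=4, b=1
        refine Or.inr (Or.inr (Or.inl ?_))
        show fval M b.val = succN M n (fval M a.val)
        rw [ha1, hb1]; simp only [fval]; norm_num; rw [s4]
      · -- a=4, b=2
        refine Or.inr (Or.inr (Or.inr ?_))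
        show fval M a.val = succN M n (fval M b.val)
        rw [ha1, hb1]; simp only [fval]; norm_num; rw [s3]
      · -- a=4, b=3
        exfalso; exact hnr.2 (Or.inr ⟨0, Nat.one_pos, by omega, by omega⟩)
      · -- a=4, b=4
        exfalso; exact hne (Fin.ext (by omega))
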